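/- arXiv:2511.19664 — 2 statements merged into one kernel-verified Lean document; each statement's English description precedes it below -/
import Mathlib

section
/- Improved lower bounds theorem (discrete version): Let q(x, z, z') be a joint pmf on a finite product space satisfying the Markov property q(x|z,z') = q(x|z), and let p(z|z') be any strictly positive conditional pmf. Define L₂ = E_q[log q(x|z')] and L₁ = E_q[log q(x|z)] - E_q[KL(q(z|z',x) ‖ p(z|z'))] (expectations over the full joint q). Then L₂ - L₁ = E_{q(z')}[KL(q(z|z') ‖ p(z|z'))] ≥ 0; in particular L₂ ≥ L₁. -/
open Real Finset

/-- Marginal of `q` over `z'`. -/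
def margXZ {X Z Z' : Type*} [Fintype Z'] (q : X → Z → Z' → ℝ) (x : X) (z : Z) : ℝ :=
  ∑ z', q x z z'

/-- Marginal of `q` over `z`. -/
def margXZ' {X Z Z' : Type*} [Fintype Z] (q : X → Z → Z' → ℝ) (x : X) (z' : Z') : ℝ :=
  ∑ z, q x z z'

/-- Marginal of `q` over `x`. -/
def margZZ' {X Z Z' : Type*} [Fintype X] (q : X → Z → Z' → ℝ) (z : Z) (z' : Z') : ℝ :=
  ∑ x, q x z z'

/-- Marginal of `z`. -/
def margZ {X Z Z' : Type*} [Fintype X] [Fintype Z'] (q : X → Z → Z' → ℝ) (z : Z) : ℝ :=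
  ∑ x, ∑ z', q x z z'

/-- Marginal of `z'`. -/
def margZ' {X Z Z' : Type*} [Fintype X] [Fintype Z] (q : X → Z → Z' → ℝ) (z' : Z') : ℝ :=
  ∑ x, ∑ z, q x z z'

/-- Gibbs' inequality. -/
lemma gibbs_aux {Z : Type*} [Fintype Z] (a b : Z → ℝ)
    (ha : ∀ z, 0 < a z) (hb : ∀ z, 0 < b z)
    (hsa : ∑ z, a z = 1) (hsb : ∑ z, b z = 1) :
    0 ≤ ∑ z, a z * Real.log (a z / b z) := by
  have h : ∀ z ∈ Finset.univ, a z - b z ≤ a z * Real.log (a z / b z) := by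
    intro z _
    have hlog : Real.log (b z / a z) ≤ b z / a z - 1 :=
      Real.log_le_sub_one_of_pos (div_pos (hb z) (ha z))
    have h2 : Real.log (a z / b z) = - Real.log (b z / a z) := by
      rw [← Real.log_inv]
      congr 1
      field_simp
    have h3 : 1 - b z / a z ≤ Real.log (a z / b z) := by
      rw [h2]; linarith
    have := mul_le_mul_of_nonneg_left h3 (le_of_lt (ha z))
    have hane : a z ≠ 0 := ne_of_gt (ha z)
    calc a z - b z = a z * (1 - b z / a z) := by field_simp
    _ ≤ a z * Real.log (a z / b z) := this
  calc (0 : ℝ) = ∑ z, (a z - b z) := by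
        rw [Finset.sum_sub_distrib, hsa, hsb]; ring
  _ ≤ ∑ z, a z * Real.log (a z / b z) := Finset.sum_le_sum h

/-- Improved lower bounds (discrete version): with
`L₂ = E_q[log q(x|z')]` and
`L₁ = E_q[log q(x|z)] - E_q[KL(q(z|z',x) ‖ p(z|z'))]`,
we have `L₂ - L₁ = E_{q(z')}[KL(q(z|z') ‖ p(z|z'))] ≥ 0`, hence `L₂ ≥ L₁`. -/
theorem improved_lower_bounds_discrete {X Z Z' : Type*} [Fintype X] [Fintype Z] [Fintype Z']
    (q : X → Z → Z' → ℝ) (p : Z → Z' → ℝ)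
    (hqpos : ∀ x z z', 0 < q x z z')
    (hqsum : ∑ x, ∑ z, ∑ z', q x z z' = 1)
    (hmarkov : ∀ x z z', q x z z' / margZZ' q z z' = margXZ q x z / margZ q z)
    (hppos : ∀ z z', 0 < p z z')
    (hpsum : ∀ z', ∑ z, p z z' = 1) :
    (∑ x, ∑ z, ∑ z', q x z z' * Real.log (margXZ' q x z' / margZ' q z'))
      - ((∑ x, ∑ z, ∑ z', q x z z' * Real.log (margXZ q x z / margZ q z))
          - ∑ x, ∑ z, ∑ z', q x z z' *
              Real.log ((q x z z' / margXZ' q x z') / p z z'))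
      = (∑ z', margZ' q z' * ∑ z, (margZZ' q z z' / margZ' q z') *
            Real.log ((margZZ' q z z' / margZ' q z') / p z z')) ∧
    (0 ≤ ∑ z', margZ' q z' * ∑ z, (margZZ' q z z' / margZ' q z') *
            Real.log ((margZZ' q z z' / margZ' q z') / p z z')) ∧
    ((∑ x, ∑ z, ∑ z', q x z z' * Real.log (margXZ q x z / margZ q z))
          - ∑ x, ∑ z, ∑ z', q x z z' *
              Real.log ((q x z z' / margXZ' q x z') / p z z')
      ≤ ∑ x, ∑ z, ∑ z', q x z z' * Real.log (margXZ' q x z' / margZ' q z')) := by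
  -- nonemptiness
  have hX : Nonempty X := by
    by_contra h
    rw [not_nonempty_iff] at h
    simp [Finset.univ_eq_empty] at hqsum
  have hZ : Nonempty Z := by
    by_contra h
    rw [not_nonempty_iff] at h
    simp [Finset.univ_eq_empty] at hqsum
  have hZ' : Nonempty Z' := by
    by_contra h
    rw [not_nonempty_iff] at h
    simp [Finset.univ_eq_empty] at hqsum
  -- positivity of marginals
  have hZZ'pos : ∀ z z', 0 < margZZ' q z z' := fun z z' =>
    Finset.sum_pos (fun x _ => hqpos x z z') Finset.univ_nonempty
  have hXZ'pos : ∀ x z', 0 < margXZ' q x z' := fun x z' =>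
    Finset.sum_pos (fun z _ => hqpos x z z') Finset.univ_nonempty
  have hXZpos : ∀ x z, 0 < margXZ q x z := fun x z =>
    Finset.sum_pos (fun z' _ => hqpos x z z') Finset.univ_nonempty
  have hZpos : ∀ z, 0 < margZ q z := fun z =>
    Finset.sum_pos (fun x _ => Finset.sum_pos (fun z' _ => hqpos x z z') Finset.univ_nonempty)
      Finset.univ_nonempty
  have hZ'pos : ∀ z', 0 < margZ' q z' := fun z' =>
    Finset.sum_pos (fun x _ => Finset.sum_pos (fun z _ => hqpos x z z') Finset.univ_nonempty)
      Finset.univ_nonempty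
  have hZZ'sum : ∀ z', ∑ z, margZZ' q z z' = margZ' q z' := by
    intro z'
    rw [margZ']
    rw [Finset.sum_comm]
    rfl
  -- pointwise key identity
  have key : ∀ x z z',
      q x z z' * Real.log (margXZ' q x z' / margZ' q z')
        - (q x z z' * Real.log (margXZ q x z / margZ q z)
          - q x z z' * Real.log ((q x z z' / margXZ' q x z') / p z z'))
      = q x z z' * Real.log ((margZZ' q z z' / margZ' q z') / p z z') := by
    intro x z z'
    have h1 : Real.log (margXZ q x z / margZ q z)
        = Real.log (q x z z') - Real.log (margZZ' q z z') := by
      rw [← hmarkov x z z',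
        Real.log_div (ne_of_gt (hqpos x z z')) (ne_of_gt (hZZ'pos z z'))]
    rw [h1,
      Real.log_div (ne_of_gt (hXZ'pos x z')) (ne_of_gt (hZ'pos z')),
      Real.log_div (ne_of_gt (div_pos (hqpos x z z') (hXZ'pos x z'))) (ne_of_gt (hppos z z')),
      Real.log_div (ne_of_gt (hqpos x z z')) (ne_of_gt (hXZ'pos x z')),
      Real.log_div (ne_of_gt (div_pos (hZZ'pos z z') (hZ'pos z'))) (ne_of_gt (hppos z z')),
      Real.log_div (ne_of_gt (hZZ'pos z z')) (ne_of_gt (hZ'pos z'))]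
    ring
  -- main equality
  have main :
      (∑ x, ∑ z, ∑ z', q x z z' * Real.log (margXZ' q x z' / margZ' q z'))
      - ((∑ x, ∑ z, ∑ z', q x z z' * Real.log (margXZ q x z / margZ q z))
          - ∑ x, ∑ z, ∑ z', q x z z' *
              Real.log ((q x z z' / margXZ' q x z') / p z z'))
      = (∑ z', margZ' q z' * ∑ z, (margZZ' q z z' / margZ' q z') *
            Real.log ((margZZ' q z z' / margZ' q z') / p z z')) := by
    have rhs : (∑ z', margZ' q z' * ∑ z, (margZZ' q z z' / margZ' q z') *
            Real.log ((margZZ' q z z' / margZ' q z') / p z z'))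
        = ∑ x, ∑ z, ∑ z', q x z z' *
            Real.log ((margZZ' q z z' / margZ' q z') / p z z') := by
      have h1 : ∀ z', margZ' q z' * ∑ z, (margZZ' q z z' / margZ' q z') *
            Real.log ((margZZ' q z z' / margZ' q z') / p z z')
          = ∑ z, margZZ' q z z' * Real.log ((margZZ' q z z' / margZ' q z') / p z z') := by
        intro z'
        rw [Finset.mul_sum]
        refine Finset.sum_congr rfl fun z _ => ?_
        have : margZ' q z' ≠ 0 := ne_of_gt (hZ'pos z')
        field_simp
      rw [Finset.sum_congr rfl fun z' _ => h1 z']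
      have h2 : ∀ z', ∑ z, margZZ' q z z' * Real.log ((margZZ' q z z' / margZ' q z') / p z z')
          = ∑ z, ∑ x, q x z z' * Real.log ((margZZ' q z z' / margZ' q z') / p z z') := by
        intro z'
        refine Finset.sum_congr rfl fun z _ => ?_
        rw [margZZ', Finset.sum_mul]
      rw [Finset.sum_congr rfl fun z' _ => h2 z']
      calc (∑ z', ∑ z, ∑ x, q x z z' * Real.log ((margZZ' q z z' / margZ' q z') / p z z'))
          = ∑ z', ∑ x, ∑ z, q x z z' * Real.log ((margZZ' q z z' / margZ' q z') / p z z') :=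
            Finset.sum_congr rfl fun z' _ => Finset.sum_comm
        _ = ∑ x, ∑ z', ∑ z, q x z z' * Real.log ((margZZ' q z z' / margZ' q z') / p z z') :=
            Finset.sum_comm
        _ = ∑ x, ∑ z, ∑ z', q x z z' * Real.log ((margZZ' q z z' / margZ' q z') / p z z') :=
            Finset.sum_congr rfl fun x _ => Finset.sum_comm
    rw [rhs, sub_sub_eq_add_sub, ← Finset.sum_add_distrib, ← Finset.sum_sub_distrib]
    refine Finset.sum_congr rfl fun x _ => ?_
    rw [← Finset.sum_add_distrib, ← Finset.sum_sub_distrib]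
    refine Finset.sum_congr rfl fun z _ => ?_
    rw [← Finset.sum_add_distrib, ← Finset.sum_sub_distrib]
    refine Finset.sum_congr rfl fun z' _ => ?_
    have := key x z z'
    linarith
  -- nonnegativity
  have nonneg : 0 ≤ ∑ z', margZ' q z' * ∑ z, (margZZ' q z z' / margZ' q z') *
            Real.log ((margZZ' q z z' / margZ' q z') / p z z') := by
    refine Finset.sum_nonneg fun z' _ => mul_nonneg (le_of_lt (hZ'pos z')) ?_
    refine gibbs_aux (fun z => margZZ' q z z' / margZ' q z') (fun z => p z z')
      (fun z => div_pos (hZZ'pos z z') (hZ'pos z')) (fun z => hppos z z') ?_ (hpsum z')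
    rw [← Finset.sum_div, hZZ'sum z', div_self (ne_of_gt (hZ'pos z'))]
  exact ⟨main, nonneg, by linarith⟩
end

section
/- KL divergence between two Gaussians with means μ_q, μ_p and common variance σ²(1-κ), where μ_q = (1-κ)α_s x + κ(α_s/α_t) z and μ_p = (1-κ)α_s x̂ + κ(α_s/α_t) z, equals (1/2)(SNR(s) - SNR(t))(x - x̂)², where SNR(s) = α_s²/σ_s², SNR(t) = α_t²/σ_t², κ = SNR(t)/SNR(s), and σ² = σ_s². That is, KL(N(μ_q, σ_s²(1-κ)) ‖ N(μ_p, σ_s²(1-κ))) = (1/2)(α_s²/σ_s² - α_t²/σ_t²)(x - x̂)². -/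
/-!
For equal variances the log-likelihood ratio of two Gaussian densities is affine in `y`, so its
mean under the first Gaussian only involves that Gaussian's mean and equals
`(μ₁ - μ₂)² / (2v)`. Here `μ₁ - μ₂ = (1 - κ) αₛ (x - x̂)` and `v = σₛ² (1 - κ)`, and
`(1 - κ) SNR(s) = SNR(s) - SNR(t)` because `κ SNR(s) = SNR(t)`.
-/

open Real MeasureTheory

/-- Gaussian density on `ℝ` with mean `μ` and variance `v`. -/
noncomputable def gaussPdf (μ v x : ℝ) : ℝ :=
  (Real.sqrt (2 * Real.pi * v))⁻¹ * Real.exp (-(x - μ) ^ 2 / (2 * v))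

open ProbabilityTheory

lemma gaussPdf_eq_gaussianPDFReal (μ : ℝ) {v : ℝ} (hv : 0 ≤ v) :
    gaussPdf μ v = gaussianPDFReal μ v.toNNReal := by
  ext y
  simp [gaussPdf, gaussianPDFReal, Real.coe_toNNReal v hv]

lemma log_gaussPdf_div_gaussPdf (μ₁ μ₂ : ℝ) {v : ℝ} (hv : 0 < v) (y : ℝ) :
    log (gaussPdf μ₁ v y / gaussPdf μ₂ v y) = (μ₁ - μ₂) * (2 * y - μ₁ - μ₂) / (2 * v) := by
  have hc : (Real.sqrt (2 * π * v))⁻¹ ≠ 0 := by positivity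
  rw [gaussPdf, gaussPdf, mul_div_mul_left _ _ hc, ← Real.exp_sub, Real.log_exp]
  ring

lemma integral_affine_gaussianReal (a b μ : ℝ) (v : NNReal) :
    ∫ y, a * y + b ∂gaussianReal μ v = a * μ + b := by
  have hid : Integrable (fun y ↦ y) (gaussianReal μ v) :=
    (memLp_id_gaussianReal 1).integrable le_rfl
  rw [integral_add (hid.const_mul a) (integrable_const b), integral_const_mul]
  simp

lemma integral_log_gaussPdf_div_mul_gaussPdf (μ₁ μ₂ : ℝ) {v : ℝ} (hv : 0 < v) :
    ∫ y, log (gaussPdf μ₁ v y / gaussPdf μ₂ v y) * gaussPdf μ₁ v y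
      = (μ₁ - μ₂) ^ 2 / (2 * v) := by
  have hv' : v.toNNReal ≠ 0 := by simpa using hv
  calc ∫ y, log (gaussPdf μ₁ v y / gaussPdf μ₂ v y) * gaussPdf μ₁ v y
      = ∫ y, gaussianPDFReal μ₁ v.toNNReal y •
          ((μ₁ - μ₂) / v * y + (-(μ₁ - μ₂) * (μ₁ + μ₂) / (2 * v))) := by
        congr 1 with y
        rw [log_gaussPdf_div_gaussPdf μ₁ μ₂ hv, gaussPdf_eq_gaussianPDFReal μ₁ hv.le, smul_eq_mul]
        field_simp
        ring
    _ = (μ₁ - μ₂) / v * μ₁ + (-(μ₁ - μ₂) * (μ₁ + μ₂) / (2 * v)) := by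
        rw [← integral_gaussianReal_eq_integral_smul hv', integral_affine_gaussianReal]
    _ = (μ₁ - μ₂) ^ 2 / (2 * v) := by
        field_simp
        ring

theorem kl_diffusion_posterior_general (αs αt σs σt x xhat z : ℝ)
    (hαs : 0 < αs) (hσs : 0 < σs)
    (κ : ℝ) (hκdef : κ = (αt ^ 2 / σt ^ 2) / (αs ^ 2 / σs ^ 2)) (hκ1 : κ < 1) :
    ∫ y : ℝ,
        Real.log (gaussPdf ((1 - κ) * αs * x + κ * (αs / αt) * z) (σs ^ 2 * (1 - κ)) y
            / gaussPdf ((1 - κ) * αs * xhat + κ * (αs / αt) * z) (σs ^ 2 * (1 - κ)) y)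
          * gaussPdf ((1 - κ) * αs * x + κ * (αs / αt) * z) (σs ^ 2 * (1 - κ)) y
      = (1 / 2) * (αs ^ 2 / σs ^ 2 - αt ^ 2 / σt ^ 2) * (x - xhat) ^ 2 := by
  have h1κ : 0 < 1 - κ := by linarith
  have hsnr : αt ^ 2 / σt ^ 2 = κ * (αs ^ 2 / σs ^ 2) := by
    rw [hκdef, div_mul_cancel₀]
    positivity
  rw [integral_log_gaussPdf_div_mul_gaussPdf _ _ (by positivity), hsnr]
  field_simp
  ring

/-- KL divergence between the diffusion-posterior Gaussians with means
`μ_q = (1-κ)α_s x + κ(α_s/α_t) z` and `μ_p = (1-κ)α_s x̂ + κ(α_s/α_t) z`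
and common variance `σ_s²(1-κ)` equals `(1/2)(SNR(s) - SNR(t))(x - x̂)²`. -/
theorem kl_diffusion_posterior (αs αt σs σt x xhat z : ℝ)
    (hαs : 0 < αs) (hαt : 0 < αt) (hσs : 0 < σs) (hσt : 0 < σt)
    (κ : ℝ) (hκdef : κ = (αt ^ 2 / σt ^ 2) / (αs ^ 2 / σs ^ 2)) (hκ0 : 0 < κ) (hκ1 : κ < 1) :
    ∫ y : ℝ,
        Real.log (gaussPdf ((1 - κ) * αs * x + κ * (αs / αt) * z) (σs ^ 2 * (1 - κ)) y
            / gaussPdf ((1 - κ) * αs * xhat + κ * (αs / αt) * z) (σs ^ 2 * (1 - κ)) y)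
          * gaussPdf ((1 - κ) * αs * x + κ * (αs / αt) * z) (σs ^ 2 * (1 - κ)) y
      = (1 / 2) * (αs ^ 2 / σs ^ 2 - αt ^ 2 / σt ^ 2) * (x - xhat) ^ 2 :=
  kl_diffusion_posterior_general αs αt σs σt x xhat z hαs hσs κ hκdef hκ1
end
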